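/- arXiv:2506.13720 — 8 statements merged into one kernel-verified Lean document; each statement's English description precedes it below -/
import Mathlib

section
/- (Oracle call efficiency, Lemma 2.) Let f, c : ℕ → ℕ and m : ℕ. Suppose that for every k < m, one of the following holds: (i) f(k+1) + 1 = f(k) and c(k+1) = c(k) (the oracle does not optimize the segment: one finger is removed and the circuit size is unchanged), or (ii) f(k+1) = f(k) + 1 and c(k+1) + 1 ≤ c(k) (the oracle optimizes the segment: the circuit size decreases by at least 1 and the finger count increases by 1). Then m ≤ f(0) + 2·c(0). In particular, the potential L = f + 2c decreases by at least 1 at each step, so the number of steps (oracle calls) is at most the initial potential. -/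
theorem oracle_call_efficiency
    (f c : ℕ → ℕ) (m : ℕ)
    (hstep : ∀ k < m,
      (f (k + 1) + 1 = f k ∧ c (k + 1) = c k) ∨
      (f (k + 1) = f k + 1 ∧ c (k + 1) + 1 ≤ c k)) :
    m ≤ f 0 + 2 * c 0 := by
  have key : ∀ n ≤ m, n + f n + 2 * c n ≤ f 0 + 2 * c 0 := by
    intro n hn
    induction n with
    | zero => omega
    | succ k ih =>
      have hk := hstep k (by omega)
      have := ih (by omega)
      omega
  have := key m le_rfl
  omega
end

section
/- (Number of fingers across rounds, Lemma 3.) Let Ω be a positive natural number, let F, C, S : ℕ → ℕ and r : ℕ. Suppose that for every k < r: (i) F(k) ≤ 4Ω · S(k) (in each round at least a 1/(4Ω) fraction of the fingers is selected), and (ii) F(k+1) + 2·C(k+1) + S(k) ≤ F(k) + 2·C(k) (each of the S(k) oracle calls of round k decreases the potential F + 2C by at least 1). Then the total number of fingers across all rounds satisfies ∑_{k<r} F(k) ≤ 4Ω · (F(0) + 2·C(0)). -/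
theorem total_fingers_across_rounds
    (Ω : ℕ) (hΩ : 0 < Ω) (F C S : ℕ → ℕ) (r : ℕ)
    (hsel : ∀ k < r, F k ≤ 4 * Ω * S k)
    (hpot : ∀ k < r, F (k + 1) + 2 * C (k + 1) + S k ≤ F k + 2 * C k) :
    ∑ k ∈ Finset.range r, F k ≤ 4 * Ω * (F 0 + 2 * C 0) := by
  have hS : ∀ n ≤ r, ∑ k ∈ Finset.range n, S k + (F n + 2 * C n) ≤ F 0 + 2 * C 0 := by
    intro n hn
    induction n with
    | zero => simp
    | succ m ih =>
      have hm := ih (Nat.le_of_succ_le hn)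
      rw [Finset.sum_range_succ]
      have := hpot m (Nat.lt_of_succ_le hn)
      omega
  calc ∑ k ∈ Finset.range r, F k ≤ ∑ k ∈ Finset.range r, 4 * Ω * S k :=
        Finset.sum_le_sum fun k hk => hsel k (Finset.mem_range.mp hk)
    _ = 4 * Ω * ∑ k ∈ Finset.range r, S k := (Finset.mul_sum _ _ _).symm
    _ ≤ 4 * Ω * (F 0 + 2 * C 0) :=
        Nat.mul_le_mul_left _ (le_trans (Nat.le_add_right _ _) (hS r le_rfl))
end

section
/- (Correctness of the index-tree 'before' operation.) Let k be a natural number, let w : ℕ → ℕ be an assignment of weights to leaves, and let i be a natural number with i < 2^k. Then ∑_{j ∈ {0,…,k−1}, bit j of i equals 1} ( ∑_{m ∈ [ 2^{j+1}·(i / 2^{j+1}), 2^{j+1}·(i / 2^{j+1}) + 2^j ) } w(m) ) = ∑_{m < i} w(m). That is, summing, over each level j at which the path from leaf i to the root turns right (bit j of i is set), the total weight of the left sibling's block of 2^j leaves, yields exactly the prefix sum of the weights of leaves 0, …, i−1. -/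
theorem indexTree_before_correct
    (k : ℕ) (w : ℕ → ℕ) (i : ℕ) (hi : i < 2 ^ k) :
    ∑ j ∈ (Finset.range k).filter (fun j => i.testBit j),
        ∑ m ∈ Finset.Ico (2 ^ (j + 1) * (i / 2 ^ (j + 1)))
            (2 ^ (j + 1) * (i / 2 ^ (j + 1)) + 2 ^ j), w m
      = ∑ m ∈ Finset.range i, w m := by
  induction k generalizing w i with
  | zero =>
    interval_cases i
    simp
  | succ k ih =>
    have hi2 : i < 2 * 2 ^ k := by
      have := hi; rw [pow_succ] at this; omega
    by_cases hb : i.testBit k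
    · -- bit k is set: i = 2^k + i'
      have hge : 2 ^ k ≤ i := by
        by_contra h
        push_neg at h
        simp [Nat.testBit_eq_false_of_lt h] at hb
      set i' := i % 2 ^ k with hi'def
      have hi'eq : i' = i - 2 ^ k := by
        rw [hi'def, Nat.mod_eq_sub_mod hge, Nat.mod_eq_of_lt (by omega)]
      have hi'lt : i' < 2 ^ k := Nat.mod_lt _ (by positivity)
      have hidec : i = 2 ^ k + i' := by omega
      -- bits below k agree between i and i'
      have hbit : ∀ j, j < k → i.testBit j = i'.testBit j := by
        intro j hj
        have hpow : (2:ℕ) ^ k = 2 ^ j * 2 ^ (k - j) := by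
          rw [← pow_add]; congr 1; omega
        have e : i / 2 ^ j = 2 ^ (k - j) + i' / 2 ^ j := by
          rw [hidec, hpow, Nat.mul_add_div (by positivity)]
        rw [Nat.testBit_eq_decide_div_mod_eq, Nat.testBit_eq_decide_div_mod_eq, e,
          decide_eq_decide]
        have hdvd : 2 ∣ 2 ^ (k - j) := dvd_pow_self 2 (by omega)
        omega
      -- division shift
      have hdiv : ∀ j, j < k →
          2 ^ (j+1) * (i / 2 ^ (j+1)) = 2 ^ k + 2 ^ (j+1) * (i' / 2 ^ (j+1)) := by
        intro j hj
        have hpow : (2:ℕ) ^ k = 2 ^ (j+1) * 2 ^ (k - (j+1)) := by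
          rw [← pow_add]; congr 1; omega
        have e : i / 2 ^ (j+1) = 2 ^ (k - (j+1)) + i' / 2 ^ (j+1) := by
          rw [hidec, hpow, Nat.mul_add_div (by positivity)]
        rw [e, Nat.mul_add]
        congr 1
        rw [← pow_add]
        congr 1
        omega
      -- split off the j = k term
      rw [Finset.range_add_one, Finset.filter_insert, if_pos hb,
        Finset.sum_insert (by simp)]
      have hdivk : i / 2 ^ (k+1) = 0 := Nat.div_eq_of_lt hi
      rw [hdivk, Nat.mul_zero]
      -- rewrite lower sum as a shifted sum over i'
      have hlow : ∑ j ∈ (Finset.range k).filter (fun j => i.testBit j),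
          ∑ m ∈ Finset.Ico (2 ^ (j + 1) * (i / 2 ^ (j + 1)))
              (2 ^ (j + 1) * (i / 2 ^ (j + 1)) + 2 ^ j), w m
          = ∑ j ∈ (Finset.range k).filter (fun j => i'.testBit j),
          ∑ m ∈ Finset.Ico (2 ^ (j + 1) * (i' / 2 ^ (j + 1)))
              (2 ^ (j + 1) * (i' / 2 ^ (j + 1)) + 2 ^ j), (fun m => w (2 ^ k + m)) m := by
        rw [Finset.sum_congr]
        · ext j
          simp only [Finset.mem_filter, Finset.mem_range]
          constructor
          · rintro ⟨h1, h2⟩; exact ⟨h1, (hbit j h1) ▸ h2⟩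
          · rintro ⟨h1, h2⟩; exact ⟨h1, (hbit j h1).symm ▸ h2⟩
        · intro j hj
          simp only [Finset.mem_filter, Finset.mem_range] at hj
          rw [hdiv j hj.1]
          set s := 2 ^ (j+1) * (i' / 2 ^ (j+1)) with hs
          rw [Finset.sum_Ico_eq_sum_range, Finset.sum_Ico_eq_sum_range]
          rw [Nat.add_sub_cancel_left, Nat.add_sub_cancel_left]
          exact Finset.sum_congr rfl (fun x _ => by simp [add_assoc])
      rw [hlow, ih (fun m => w (2 ^ k + m)) i' hi'lt]
      -- split the prefix [0, i) into [0, 2^k) and [2^k, i)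
      have hsplit : Finset.range i = Finset.range (2 ^ k) ∪ Finset.Ico (2 ^ k) i := by
        rw [Finset.range_eq_Ico, Finset.range_eq_Ico]
        exact (Finset.Ico_union_Ico_eq_Ico (Nat.zero_le _) hge).symm
      rw [hsplit, Finset.sum_union (by
          rw [Finset.range_eq_Ico]
          exact Finset.Ico_disjoint_Ico_consecutive 0 (2 ^ k) i)]
      rw [Finset.sum_Ico_eq_sum_range, Finset.sum_Ico_eq_sum_range, ← hi'eq]
      simp
    · -- bit k is 0, so i < 2^k
      have hlt : i < 2 ^ k := by
        by_contra h
        push_neg at h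
        have h1 : i / 2 ^ k = 1 :=
          Nat.div_eq_of_lt_le (by simpa using h) (by simpa [two_mul] using hi2)
        have : i.testBit k = true := by
          rw [Nat.testBit_eq_decide_div_mod_eq, h1]
          decide
        exact hb this
      rw [Finset.range_add_one, Finset.filter_insert, if_neg hb]
      exact ih w i hlt
end

section
/- (Segment decomposition after a window replacement.) Let α be a type, Ω a positive natural number, A a list over α, and l a natural number with l + 2Ω ≤ A.length. Let s' be a list over α with s'.length ≤ 2Ω, set d = 2Ω − s'.length, and let B = A.take l ++ s' ++ A.drop (l + 2Ω). Let a be a natural number with a + Ω ≤ B.length such that neither l nor l + s'.length lies in the interval [a, a + Ω). Then exactly one of the following holds: (1) a + Ω ≤ l and the segment of B at [a, a+Ω) equals the segment of A at [a, a+Ω); (2) l ≤ a, a + Ω ≤ l + s'.length, and the segment of B at [a, a+Ω) equals the segment of s' at [a − l, a − l + Ω); (3) l + s'.length ≤ a and the segment of B at [a, a+Ω) equals the segment of A at [a + d, a + d + Ω). Thus every Ω-segment of B avoiding the two boundary positions l and l + s'.length is either an unchanged Ω-segment of A or an Ω-segment of the replacement s'. -/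
theorem segment_decomposition_after_window_replacement
    {α : Type*} (Ω : ℕ) (hΩ : 0 < Ω) (A : List α) (l : ℕ)
    (hl : l + 2 * Ω ≤ A.length)
    (s' : List α) (hs' : s'.length ≤ 2 * Ω)
    (d : ℕ) (hd : d = 2 * Ω - s'.length)
    (B : List α) (hB : B = A.take l ++ s' ++ A.drop (l + 2 * Ω))
    (a : ℕ) (ha : a + Ω ≤ B.length)
    (hl_not : l ∉ Finset.Ico a (a + Ω))
    (hr_not : l + s'.length ∉ Finset.Ico a (a + Ω)) :
    (a + Ω ≤ l ∧ (B.drop a).take Ω = (A.drop a).take Ω)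
    ∨ (l ≤ a ∧ a + Ω ≤ l + s'.length ∧
        (B.drop a).take Ω = (s'.drop (a - l)).take Ω)
    ∨ (l + s'.length ≤ a ∧ (B.drop a).take Ω = (A.drop (a + d)).take Ω) := by
  simp only [Finset.mem_Ico, not_and, not_lt] at hl_not hr_not
  have hlA : l ≤ A.length := by omega
  have hlenTake : (A.take l).length = l := by
    simp [hlA]
  rcases le_or_gt (a + Ω) l with h1 | h1
  · left
    refine ⟨h1, ?_⟩
    subst hB
    rw [List.append_assoc, List.drop_append,
      List.take_append, List.drop_take,
      List.take_take, hlenTake]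
    have hmin : Ω ⊓ (l - a) = Ω := by omega
    have hlen : ((A.drop a).take (l - a)).length = l - a := by
      simp; omega
    rw [hmin, hlen]
    have h0 : Ω - (l - a) = 0 := by omega
    rw [h0, List.take_zero, List.append_nil]
  · have hla : l ≤ a := by
      rcases le_or_gt l a with h | h
      · exact h
      · exact absurd (hl_not h.le) (by omega)
    rcases le_or_gt (a + Ω) (l + s'.length) with h2 | h2
    · right; left
      refine ⟨hla, h2, ?_⟩
      subst hB
      rw [List.drop_append, List.drop_append,
        hlenTake]
      have hz : (A.take l).drop a = [] := by
        apply List.drop_eq_nil_of_le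
        rw [hlenTake]; omega
      rw [hz, List.nil_append, List.take_append]
      have h0 : Ω - (s'.drop (a - l)).length = 0 := by
        simp; omega
      rw [h0, List.take_zero, List.append_nil]
    · have hra : l + s'.length ≤ a := by
        rcases le_or_gt (l + s'.length) a with h | h
        · exact h
        · exact absurd (hr_not h.le) (by omega)
      right; right
      refine ⟨hra, ?_⟩
      subst hB
      rw [List.drop_append, List.drop_append,
        hlenTake]
      have hz1 : (A.take l).drop a = [] := by
        apply List.drop_eq_nil_of_le
        rw [hlenTake]; omega
      have hz2 : s'.drop (a - l) = [] := by
        apply List.drop_eq_nil_of_le; omega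
      rw [hz1, hz2, List.nil_append, List.nil_append, List.drop_drop]
      rw [List.length_append, hlenTake]
      have heq : l + 2 * Ω + (a - (l + s'.length)) = a + d := by omega
      rw [heq]
end

section
/- (Invariant preservation when the oracle makes no change, case (1) of Lemma 5.) Let α be a type, Ω a positive natural number, and oracle : List α → List α a well-behaved oracle. Let A be a list over α and F a finite set of natural numbers such that (A, F) satisfies the coverage invariant. Let f ∈ F, let l = f ∸ Ω (truncated subtraction), and let s = (A.drop l).take (2Ω) be the 2Ω-segment centered at f. If oracle s = s, then (A, F \ {f}) also satisfies the coverage invariant; i.e., the finger f can be safely removed. -/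
/-- The segment of a list `A` at positions `[a, a+m)`. -/
def seg {α : Type*} (A : List α) (a m : ℕ) : List α := (A.drop a).take m

/-- An oracle is well-behaved if every segment of any of its outputs is
optimal with respect to the oracle. -/
def WellBehaved {α : Type*} (oracle : List α → List α) : Prop :=
  ∀ (A : List α) (i m : ℕ),
    (seg (oracle A) i m).length ≤ (oracle (seg (oracle A) i m)).length

/-- The coverage invariant: every `Ω`-segment of `A` that is disjoint from the
finger set `F` is optimal with respect to the oracle. -/
def CoverageInv {α : Type*} (oracle : List α → List α) (Ω : ℕ)
    (A : List α) (F : Finset ℕ) : Prop :=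
  ∀ a : ℕ, a + Ω ≤ A.length → Disjoint (Finset.Ico a (a + Ω)) F →
    Ω ≤ (oracle (seg A a Ω)).length

theorem invariant_preserved_no_change
    {α : Type*} (Ω : ℕ) (hΩ : 0 < Ω)
    (oracle : List α → List α) (hwb : WellBehaved oracle)
    (A : List α) (F : Finset ℕ) (hinv : CoverageInv oracle Ω A F)
    (f : ℕ) (hf : f ∈ F)
    (l : ℕ) (hl : l = f - Ω)
    (s : List α) (hs : s = seg A l (2 * Ω))
    (hfix : oracle s = s) :
    CoverageInv oracle Ω A (F \ {f}) := by
  intro a ha hdisj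
  by_cases hF : Disjoint (Finset.Ico a (a + Ω)) F
  · exact hinv a ha hF
  · rw [Finset.not_disjoint_iff] at hF
    obtain ⟨x, hx1, hx2⟩ := hF
    have hxf : x = f := by
      by_contra h
      exact (Finset.disjoint_left.mp hdisj hx1) (Finset.mem_sdiff.mpr ⟨hx2, by simp [h]⟩)
    subst hxf
    rw [Finset.mem_Ico] at hx1
    obtain ⟨haf, hfa⟩ := hx1
    have hseg : seg s (a - l) Ω = seg A a Ω := by
      subst hs
      simp only [seg, List.drop_take, List.drop_drop, List.take_take]
      have h1 : l + (a - l) = a := by omega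
      have h2 : Ω ⊓ (2 * Ω - (a - l)) = Ω := by omega
      rw [h1, h2]
    have hlen : (seg A a Ω).length = Ω := by
      simp only [seg, List.length_take, List.length_drop]
      omega
    have h := hwb s (a - l) Ω
    rw [hfix, hseg, hlen] at h
    exact h
end

section
/- (Invariant preservation when the oracle optimizes the window, case (2) of Lemma 5.) Let α be a type, Ω a positive natural number, and oracle : List α → List α a well-behaved oracle. Let A be a list over α and F a finite set of natural numbers such that (A, F) satisfies the coverage invariant. Let f ∈ F with f < A.length, let l = f ∸ Ω, let s = (A.drop l).take (2Ω), and let s' = oracle s; suppose s'.length < s.length. Let d = s.length − s'.length, let B = A.take l ++ s' ++ A.drop (l + s.length), and let F' = ((F \ {f}).image shift) ∪ {l, l + s'.length}, where shift g = g if g ≤ l and shift g = max l (g ∸ d) otherwise. Then (B, F') satisfies the coverage invariant: every Ω-segment of B disjoint from F' is optimal with respect to the oracle. -/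
/-- Segments entirely inside a prefix are unchanged by `take`. -/
lemma seg_take_aux {α : Type*} (L : List α) (a m l : ℕ) (h : a + m ≤ l) :
    seg (L.take l) a m = seg L a m := by
  unfold seg
  rw [List.drop_take, List.take_take]
  congr 1
  omega

theorem invariant_preserved_optimized
    {α : Type*} (Ω : ℕ) (hΩ : 0 < Ω)
    (oracle : List α → List α) (hwb : WellBehaved oracle)
    (A : List α) (F : Finset ℕ) (hinv : CoverageInv oracle Ω A F)
    (f : ℕ) (hf : f ∈ F) (hfA : f < A.length)
    (l : ℕ) (hl : l = f - Ω)
    (s : List α) (hs : s = seg A l (2 * Ω))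
    (s' : List α) (hs' : s' = oracle s)
    (hshorter : s'.length < s.length)
    (d : ℕ) (hd : d = s.length - s'.length)
    (B : List α) (hB : B = A.take l ++ s' ++ A.drop (l + s.length))
    (shift : ℕ → ℕ) (hshift : shift = fun g => if g ≤ l then g else max l (g - d))
    (F' : Finset ℕ) (hF' : F' = (F \ {f}).image shift ∪ {l, l + s'.length}) :
    CoverageInv oracle Ω B F' := by
  -- basic length facts
  have hlA : l ≤ A.length := by omega
  have hslen : s.length = min (2 * Ω) (A.length - l) := by
    rw [hs]; simp [seg]
  have hls : l + s.length ≤ A.length := by omega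
  have htakel : (A.take l).length = l := by simp [hlA]
  have hBlen : B.length + d = A.length := by
    rw [hB]
    simp only [List.length_append, List.length_take, List.length_drop]
    omega
  intro a ha hdisj
  -- the two new fingers are not in the window
  have hlF' : l ∈ F' := by rw [hF']; simp
  have hl'F' : l + s'.length ∈ F' := by rw [hF']; simp
  have hnl : ¬ (a ≤ l ∧ l < a + Ω) := by
    intro h
    exact Finset.disjoint_left.mp hdisj (Finset.mem_Ico.mpr ⟨h.1, h.2⟩) hlF'
  have hnl' : ¬ (a ≤ l + s'.length ∧ l + s'.length < a + Ω) := by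
    intro h
    exact Finset.disjoint_left.mp hdisj (Finset.mem_Ico.mpr ⟨h.1, h.2⟩) hl'F'
  rcases le_or_gt (a + Ω) l with hcase | hcase1
  · -- window entirely to the left of the optimized region
    have hseg : seg B a Ω = seg A a Ω := by
      have hBl : B.take l = A.take l := by
        rw [hB, List.append_assoc, List.take_append_of_le_length (by omega),
          List.take_take]
        congr 1
        omega
      rw [← seg_take_aux B a Ω l hcase, hBl, seg_take_aux A a Ω l hcase]
    rw [hseg]
    apply hinv a (by omega)
    rw [Finset.disjoint_left]
    intro g hg hgF
    rw [Finset.mem_Ico] at hg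
    have hgf : g ≠ f := by omega
    have : g ∈ F' := by
      rw [hF']
      apply Finset.mem_union_left
      exact Finset.mem_image.mpr ⟨g, Finset.mem_sdiff.mpr ⟨hgF, by simpa using hgf⟩,
        by rw [hshift]; simp [show g ≤ l by omega]⟩
    exact Finset.disjoint_left.mp hdisj (Finset.mem_Ico.mpr hg) this
  · rcases le_or_gt (a + Ω) (l + s'.length) with hcase2 | hcase2
    · -- window entirely inside the optimized region
      have hal : l < a := by
        rcases le_or_gt a l with h | h
        · exact absurd ⟨h, by omega⟩ hnl
        · exact h
      have hseg : seg B a Ω = seg s' (a - l) Ω := by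
        unfold seg
        rw [hB, List.append_assoc, List.drop_append,
          List.drop_eq_nil_of_le (by omega), List.nil_append, htakel,
          List.drop_append,
          List.take_append_of_le_length (by simp; omega)]
      rw [hseg]
      have hlen : (seg s' (a - l) Ω).length = Ω := by
        simp [seg]; omega
      calc Ω = (seg s' (a - l) Ω).length := hlen.symm
        _ ≤ (oracle (seg s' (a - l) Ω)).length := by
            rw [hs']; exact hwb s (a - l) Ω
    · -- window entirely to the right of the optimized region
      have hal : l + s'.length < a := by
        rcases le_or_gt a (l + s'.length) with h | h
        · exact absurd ⟨h, by omega⟩ hnl'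
        · exact h
      have hseg : seg B a Ω = seg A (a + d) Ω := by
        unfold seg
        rw [hB, List.drop_append,
          List.drop_eq_nil_of_le (by simp [htakel]; omega), List.nil_append,
          List.drop_drop]
        congr 2
        simp [htakel]
        omega
      rw [hseg]
      have hsΩ : Ω ≤ s.length := by omega
      apply hinv (a + d) (by omega)
      rw [Finset.disjoint_left]
      intro g hg hgF
      rw [Finset.mem_Ico] at hg
      have hgf : g ≠ f := by omega
      have hgl : ¬ g ≤ l := by omega
      have : g - d ∈ F' := by
        rw [hF']
        apply Finset.mem_union_left
        refine Finset.mem_image.mpr ⟨g, Finset.mem_sdiff.mpr ⟨hgF, by simpa using hgf⟩, ?_⟩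
        rw [hshift]
        simp only [hgl, if_false]
        omega
      exact Finset.disjoint_left.mp hdisj (Finset.mem_Ico.mpr (by omega)) this
end

section
/- (Local optimality of POPQC, Theorem 2.) Let α be a type, Ω a positive natural number, and oracle : List α → List α a well-behaved oracle. Define the round-step relation Step on pairs (A, F) of a list over α and a finite set F ⊆ ℕ by: (A, F) Step (B, F') iff there exists f ∈ F with f < A.length such that, putting l = f ∸ Ω, s = (A.drop l).take (2Ω), s' = oracle s, d = s.length − s'.length, and shift g = (if g ≤ l then g else max l (g ∸ d)), either (i) s' = s, B = A, and F' = F \ {f}, or (ii) s'.length < s.length, B = A.take l ++ s' ++ A.drop (l + s.length), and F' = ((F \ {f}).image shift) ∪ {l, l + s'.length}. Then: if (A₀, F₀) satisfies the coverage invariant and (A₀, F₀) is related by the reflexive-transitive closure of Step to some pair (A*, ∅) with empty finger set, then A* is locally optimal with respect to oracle and Ω, i.e., every Ω-segment of A* satisfies Ω ≤ (oracle ((A*.drop a).take Ω)).length. -/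
/-- One round-step of the POPQC process: optimize the `2Ω`-window centered at a
selected finger `f` and update the finger set accordingly. -/
def Step {α : Type*} (Ω : ℕ) (oracle : List α → List α)
    (p q : List α × Finset ℕ) : Prop :=
  ∃ f ∈ p.2, f < p.1.length ∧
    let l := f - Ω
    let s := seg p.1 l (2 * Ω)
    let s' := oracle s
    let d := s.length - s'.length
    let shift : ℕ → ℕ := fun g => if g ≤ l then g else max l (g - d)
    ((s' = s ∧ q.1 = p.1 ∧ q.2 = p.2 \ {f}) ∨
     (s'.length < s.length ∧
       q.1 = p.1.take l ++ s' ++ p.1.drop (l + s.length) ∧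
       q.2 = (p.2 \ {f}).image shift ∪ {l, l + s'.length}))

lemma seg_length {α : Type*} (A : List α) (a m : ℕ) (h : a + m ≤ A.length) :
    (seg A a m).length = m := by simp [seg]; omega

lemma seg_of_seg {α : Type*} (A : List α) (l M i m : ℕ) (h : i + m ≤ M) :
    seg (seg A l M) i m = seg A (l + i) m := by
  unfold seg
  rw [List.drop_take, List.take_take, List.drop_drop, Nat.min_eq_left (by omega)]

lemma seg_take {α : Type*} (A : List α) (l a m : ℕ) (h : a + m ≤ l) :
    seg (A.take l) a m = seg A a m := by
  unfold seg
  rw [List.drop_take, List.take_take, Nat.min_eq_left (by omega)]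

lemma seg_append_left {α : Type*} (X Y : List α) (a m : ℕ) (h : a + m ≤ X.length) :
    seg (X ++ Y) a m = seg X a m := by
  unfold seg
  rw [List.drop_append_of_le_length (by omega : a ≤ X.length),
    List.take_append_of_le_length (by simp; omega : m ≤ (X.drop a).length)]

lemma seg_append_right {α : Type*} (X Y : List α) (a m : ℕ) (h : X.length ≤ a) :
    seg (X ++ Y) a m = seg Y (a - X.length) m := by
  unfold seg
  rw [List.drop_append, List.drop_eq_nil_of_le h]
  simp

lemma seg_drop {α : Type*} (A : List α) (c i m : ℕ) :
    seg (A.drop c) i m = seg A (c + i) m := by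
  unfold seg
  rw [List.drop_drop, Nat.add_comm]

lemma step_pres {α : Type*} (Ω : ℕ) (hΩ : 0 < Ω) (oracle : List α → List α)
    (hwb : WellBehaved oracle) (p q : List α × Finset ℕ)
    (hstep : Step Ω oracle p q) (hinv : CoverageInv oracle Ω p.1 p.2) :
    CoverageInv oracle Ω q.1 q.2 := by
  obtain ⟨A, F⟩ := p
  obtain ⟨B, F'⟩ := q
  obtain ⟨f, hfF, hfA, hc⟩ := hstep
  simp only at hc hfF hfA hinv ⊢
  set l := f - Ω with hl
  set s := seg A l (2 * Ω) with hsdef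
  have hlf : l ≤ f := Nat.sub_le _ _
  have hlA : l < A.length := lt_of_le_of_lt hlf hfA
  have hfl : f ≤ l + Ω := by omega
  have hsl : s.length = min (2 * Ω) (A.length - l) := by
    simp [hsdef, seg]
  have hfn : f < l + s.length := by omega
  have hnA : l + s.length ≤ A.length := by omega
  rcases hc with ⟨hss, hB, hF⟩ | ⟨hlt, hB, hF⟩
  · -- case (i): no change
    rw [hB, hF]
    intro a ha hdisj
    by_cases hcase : a ≤ f ∧ f < a + Ω
    · have hla : l ≤ a := by omega
      have h2 := hwb s (a - l) Ω
      rw [hss] at h2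
      rw [hsdef, seg_of_seg A l (2 * Ω) (a - l) Ω (by omega),
        Nat.add_sub_cancel' hla] at h2
      rwa [seg_length A a Ω ha] at h2
    · refine hinv a ha ?_
      rw [Finset.disjoint_left] at hdisj ⊢
      intro g hg hgF
      rcases eq_or_ne g f with rfl | hne
      · rw [Finset.mem_Ico] at hg; exact hcase hg
      · exact hdisj hg (Finset.mem_sdiff.2 ⟨hgF, by simp [hne]⟩)
  · -- case (ii)
    set n := s.length with hn
    set n' := (oracle s).length with hn'
    set d := n - n' with hd
    rw [hB, hF]
    have hBlen : (A.take l ++ oracle s ++ A.drop (l + n)).length = A.length - d := by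
      simp; omega
    intro a ha hdisj
    rw [hBlen] at ha
    have h1 : ¬(a ≤ l ∧ l < a + Ω) := by
      intro h
      exact Finset.disjoint_left.1 hdisj (Finset.mem_Ico.2 h) (by simp)
    have h2 : ¬(a ≤ l + n' ∧ l + n' < a + Ω) := by
      intro h
      exact Finset.disjoint_left.1 hdisj (Finset.mem_Ico.2 h) (by simp)
    have hshift : ∀ g ∈ F, g ≠ f →
        (if g ≤ l then g else max l (g - d)) ∉ Finset.Ico a (a + Ω) := by
      intro g hg hne
      refine Finset.disjoint_right.1 hdisj ?_
      exact Finset.mem_union_left _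
        (Finset.mem_image_of_mem _ (Finset.mem_sdiff.2 ⟨hg, by simp [hne]⟩))
    have hsplit : a + Ω ≤ l ∨ (l < a ∧ a + Ω ≤ l + n') ∨ l + n' < a := by omega
    have hltake : (A.take l).length = l := by simp; omega
    rcases hsplit with hA1 | ⟨hA2, hA2'⟩ | hA3
    · -- before the window: unchanged
      have hseg : seg (A.take l ++ oracle s ++ A.drop (l + n)) a Ω = seg A a Ω := by
        rw [seg_append_left _ _ _ _ (by simp; omega),
          seg_append_left _ _ _ _ (by omega : a + Ω ≤ (A.take l).length),
          seg_take _ _ _ _ hA1]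
      rw [hseg]
      refine hinv a (by omega) ?_
      rw [Finset.disjoint_left]
      intro g hg hgF
      rw [Finset.mem_Ico] at hg
      have hne : g ≠ f := by omega
      have := hshift g hgF hne
      rw [if_pos (by omega : g ≤ l)] at this
      exact this (Finset.mem_Ico.2 hg)
    · -- inside the optimized segment
      have hseg : seg (A.take l ++ oracle s ++ A.drop (l + n)) a Ω
          = seg (oracle s) (a - l) Ω := by
        rw [seg_append_left _ _ _ _ (by simp; omega),
          seg_append_right _ _ _ _ (by omega : (A.take l).length ≤ a), hltake]
      rw [hseg]
      have h3 := hwb s (a - l) Ω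
      have hlen : (seg (oracle s) (a - l) Ω).length = Ω :=
        seg_length _ _ _ (by omega)
      rwa [hlen] at h3
    · -- after the window: shifted by d
      have hseg : seg (A.take l ++ oracle s ++ A.drop (l + n)) a Ω
          = seg A (a + d) Ω := by
        rw [seg_append_right _ _ _ _ (by simp; omega),
          seg_drop]
        congr 1
        simp
        omega
      rw [hseg]
      refine hinv (a + d) (by omega) ?_
      rw [Finset.disjoint_left]
      intro g hg hgF
      rw [Finset.mem_Ico] at hg
      have hne : g ≠ f := by omega
      have := hshift g hgF hne
      rw [if_neg (by omega : ¬ g ≤ l), Nat.max_eq_right (by omega : l ≤ g - d)] at this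
      exact this (Finset.mem_Ico.2 (by omega))

theorem popqc_local_optimality
    {α : Type*} (Ω : ℕ) (hΩ : 0 < Ω)
    (oracle : List α → List α) (hwb : WellBehaved oracle)
    (A₀ Astar : List α) (F₀ : Finset ℕ)
    (hinv : CoverageInv oracle Ω A₀ F₀)
    (hreach : Relation.ReflTransGen (Step Ω oracle) (A₀, F₀) (Astar, ∅)) :
    ∀ a : ℕ, a + Ω ≤ Astar.length → Ω ≤ (oracle (seg Astar a Ω)).length := by
  have key : ∀ p : List α × Finset ℕ,
      Relation.ReflTransGen (Step Ω oracle) p (Astar, (∅ : Finset ℕ)) →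
      CoverageInv oracle Ω p.1 p.2 →
      CoverageInv oracle Ω Astar (∅ : Finset ℕ) := by
    intro p h
    induction h using Relation.ReflTransGen.head_induction_on with
    | refl => exact fun h => h
    | head hstep _ ih =>
        exact fun hi => ih (step_pres Ω hΩ oracle hwb _ _ hstep hi)
  intro a ha
  exact key (A₀, F₀) hreach hinv a ha (Finset.disjoint_empty_right _)
end

section
/- (Termination and oracle-call bound of the POPQC process.) Let α be a type, Ω a positive natural number, and oracle : List α → List α. Define the round-step relation Step on pairs (A, F) of a list over α and a finite set F ⊆ ℕ by: (A, F) Step (B, F') iff there exists f ∈ F with f < A.length such that, putting l = f ∸ Ω, s = (A.drop l).take (2Ω), s' = oracle s, d = s.length − s'.length, and shift g = (if g ≤ l then g else max l (g ∸ d)), either (i) s' = s, B = A, and F' = F \ {f}, or (ii) s'.length < s.length, B = A.take l ++ s' ++ A.drop (l + s.length), and F' = ((F \ {f}).image shift) ∪ {l, l + s'.length}. Then every chain (A₀, F₀) Step (A₁, F₁) Step … Step (A_m, F_m) satisfies m ≤ |F₀| + 2·A₀.length. In particular, each step strictly decreases the potential |F| + 2·(length of A), so the process performs at most |F₀| + 2·A₀.length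 oracle-driven steps and terminates. -/
lemma step_decrease {α : Type*} {Ω : ℕ} {oracle : List α → List α}
    {p q : List α × Finset ℕ} (h : Step Ω oracle p q) :
    q.2.card + 2 * q.1.length < p.2.card + 2 * p.1.length := by
  obtain ⟨f, hf, hflt, h⟩ := h
  simp only at h
  have hcard : (p.2 \ {f}).card = p.2.card - 1 := by
    rw [Finset.sdiff_singleton_eq_erase, Finset.card_erase_of_mem hf]
  have hpos : 0 < p.2.card := Finset.card_pos.2 ⟨f, hf⟩
  rcases h with ⟨_, hB, hG⟩ | ⟨hlt, hB, hG⟩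
  · rw [hB, hG, hcard]; omega
  · set l := f - Ω with hl
    have hlle : l ≤ p.1.length := by omega
    have hslen : (seg p.1 l (2 * Ω)).length = min (2 * Ω) (p.1.length - l) := by
      simp [seg]
    have hBlen : q.1.length =
        l + (oracle (seg p.1 l (2 * Ω))).length +
          (p.1.length - (l + (seg p.1 l (2 * Ω)).length)) := by
      rw [hB]; simp; omega
    have hGcard : q.2.card ≤ p.2.card + 1 := by
      rw [hG]
      calc ((p.2 \ {f}).image _ ∪ {l, l + (oracle (seg p.1 l (2 * Ω))).length}).card
          ≤ ((p.2 \ {f}).image _).card + ({l, l + (oracle (seg p.1 l (2 * Ω))).length} : Finset ℕ).card :=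
            Finset.card_union_le _ _
        _ ≤ (p.2 \ {f}).card + 2 := by
            have h1 := Finset.card_image_le (s := p.2 \ {f})
              (f := fun g => if g ≤ l then g else max l (g - ((seg p.1 l (2 * Ω)).length - (oracle (seg p.1 l (2 * Ω))).length)))
            have h2 : ({l, l + (oracle (seg p.1 l (2 * Ω))).length} : Finset ℕ).card ≤ 2 :=
              Finset.card_insert_le _ _ |>.trans (by simp)
            omega
        _ ≤ p.2.card + 1 := by omega
    omega

theorem popqc_termination_bound
    {α : Type*} (Ω : ℕ) (hΩ : 0 < Ω)
    (oracle : List α → List α)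
    (A : ℕ → List α) (F : ℕ → Finset ℕ) (m : ℕ)
    (hchain : ∀ k < m, Step Ω oracle (A k, F k) (A (k + 1), F (k + 1))) :
    m ≤ (F 0).card + 2 * (A 0).length := by
  have key : ∀ k ≤ m, k + ((F k).card + 2 * (A k).length) ≤ (F 0).card + 2 * (A 0).length := by
    intro k hk
    induction k with
    | zero => simp
    | succ n ih =>
      have h := step_decrease (hchain n (by omega))
      have := ih (by omega)
      simp only at h
      omega
  have := key m le_rfl
  omega
end
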